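/- arXiv:1704.02748 — 5 statements merged into one kernel-verified Lean document; each statement's English description precedes it below -/
import Mathlib

section
/- Let K and L be integers with 2 ≤ L ≤ K, let T > 0, and let b_0, …, b_{L−1} be nonnegative reals. Then the optimal worst-case objective sup over α ∈ ℝ^L with α_0 = 0 of (inf over ψ ∈ ℝ^L of J(α, ψ)) is at least K·∑_{l=0}^{L−1} b_l². -/
/-!
Take `α_l = 2πl/(KT)`. For `l < m` the phases `(α_m − α_l)·k·T = 2π(m − l)k/K` make the inner
cosine sum the real part of a full geometric sum of a `K`-th root of unity, which is `≠ 1`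
because `0 < m − l < K`; so every cross term vanishes and `J(α, ·) ≡ K·∑ b_l²`. The supremum is
over a set bounded above, since `|J − K·∑ b_l²| ≤ 2K·∑_{l<m} |b_l b_m|`.
-/

open Real Finset

/-- The objective function `J(α, ψ)` from the paper:
`J = K·∑ b_l² + 2·∑_{l<m} b_l b_m ∑_{k=0}^{K-1} cos((ψ_m − ψ_l) − (α_m − α_l)·k·T)`. -/
noncomputable def J (K L : ℕ) (T : ℝ) (b α ψ : Fin L → ℝ) : ℝ :=
  K * ∑ l, (b l) ^ 2 +
    2 * ∑ l, ∑ m ∈ Finset.Ioi l,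
      b l * b m * ∑ k ∈ Finset.range K,
        Real.cos ((ψ m - ψ l) - (α m - α l) * (k : ℝ) * T)

lemma sum_range_cos_add_two_pi_mul_div_eq_zero {K : ℕ} {j : ℤ} (hj : ¬ (K : ℤ) ∣ j) (θ : ℝ) :
    ∑ k ∈ range K, cos (θ + 2 * π * j * k / K) = 0 := by
  rcases eq_or_ne K 0 with rfl | hK
  · simp
  have hζ := Complex.isPrimitiveRoot_exp K hK
  set ζ := Complex.exp (2 * π * Complex.I / K)
  have hcos (k : ℕ) :
      cos (θ + 2 * π * j * k / K) = (Complex.exp (θ * Complex.I) * (ζ ^ j) ^ k).re := by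
    rw [← Complex.exp_ofReal_mul_I_re, ← zpow_natCast, ← zpow_mul, ← Complex.exp_int_mul,
      ← Complex.exp_add]
    push_cast
    ring_nf
  have hgeom : ∑ k ∈ range K, (ζ ^ j) ^ k = 0 := by
    rw [geom_sum_eq ((hζ.zpow_eq_one_iff_dvd j).not.mpr hj), ← zpow_natCast, ← zpow_mul,
      mul_comm, zpow_mul, zpow_natCast, hζ.pow_eq_one, one_zpow, sub_self, zero_div]
  simp only [hcos, ← Complex.re_sum, ← mul_sum, hgeom, mul_zero, Complex.zero_re]

noncomputable def equispacedFreq (K : ℕ) (T : ℝ) (L : ℕ) : Fin L → ℝ :=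
  fun l => 2 * π * l / (K * T)

lemma equispacedFreq_zero (K : ℕ) (T : ℝ) {L : ℕ} (hL : 0 < L) :
    equispacedFreq K T L ⟨0, hL⟩ = 0 := by
  simp [equispacedFreq]

lemma J_equispacedFreq {K L : ℕ} (hLK : L ≤ K) {T : ℝ} (hT : T ≠ 0) (b ψ : Fin L → ℝ) :
    J K L T b (equispacedFreq K T L) ψ = K * ∑ l, b l ^ 2 := by
  suffices hcross : ∀ l, ∀ m ∈ Ioi l, ∑ k ∈ range K,
      cos ((ψ m - ψ l) - (equispacedFreq K T L m - equispacedFreq K T L l) * k * T) = 0 by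
    rw [J, sum_eq_zero fun l _ => sum_eq_zero fun m hm => by rw [hcross l m hm, mul_zero]]
    simp
  intro l m hlm
  have hlm : (l : ℕ) < m := Fin.lt_def.mp (mem_Ioi.mp hlm)
  have hK : (K : ℝ) ≠ 0 := Nat.cast_ne_zero.mpr (by omega)
  have hndvd : ¬ (K : ℤ) ∣ ((l : ℕ) - (m : ℕ) : ℤ) := fun hdvd => by
    have := Int.eq_zero_of_abs_lt_dvd hdvd (by rw [abs_lt]; omega)
    omega
  rw [← sum_range_cos_add_two_pi_mul_div_eq_zero hndvd (ψ m - ψ l)]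
  refine sum_congr rfl fun k _ => congrArg cos ?_
  simp only [equispacedFreq]
  push_cast
  field_simp
  ring

lemma abs_J_sub_le (K L : ℕ) (T : ℝ) (b α ψ : Fin L → ℝ) :
    |J K L T b α ψ - K * ∑ l, b l ^ 2| ≤ 2 * ∑ l, ∑ m ∈ Ioi l, |b l * b m| * K := by
  rw [J, add_sub_cancel_left, abs_mul, abs_two]
  gcongr
  refine (abs_sum_le_sum_abs _ _).trans (sum_le_sum fun l _ => ?_)
  refine (abs_sum_le_sum_abs _ _).trans (sum_le_sum fun m _ => ?_)
  rw [abs_mul]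
  gcongr
  refine (abs_sum_le_sum_abs _ _).trans ?_
  simpa using sum_le_sum fun k (_ : k ∈ range K) => abs_cos_le_one _

lemma bddAbove_range_iInf_J (K L : ℕ) (T : ℝ) (b : Fin L → ℝ) :
    BddAbove (Set.range fun α => ⨅ ψ, J K L T b α ψ) := by
  set C := 2 * ∑ l, ∑ m ∈ Ioi l, |b l * b m| * K
  refine ⟨K * ∑ l, b l ^ 2 + C, ?_⟩
  rintro _ ⟨α, rfl⟩
  have hbound := abs_J_sub_le K L T b α
  have hbdd : BddBelow (Set.range (J K L T b α)) := ⟨K * ∑ l, b l ^ 2 - C, by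
    rintro _ ⟨ψ, rfl⟩
    linarith [(abs_le.mp (hbound ψ)).1]⟩
  linarith [ciInf_le hbdd 0, (abs_le.mp (hbound 0)).2]

/-- for `2 ≤ L ≤ K`, `T > 0`, nonnegative `b`, the optimal worst-case
objective `sup_{α, α₀ = 0} inf_ψ J(α, ψ)` is at least `K·∑ b_l²`. -/
theorem stmt_0 (K L : ℕ) (hL : 2 ≤ L) (hLK : L ≤ K) (T : ℝ) (hT : 0 < T)
    (b : Fin L → ℝ) :
    (K : ℝ) * ∑ l, (b l) ^ 2 ≤
      sSup {v : ℝ | ∃ α : Fin L → ℝ, α ⟨0, by omega⟩ = 0 ∧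
        v = ⨅ ψ : Fin L → ℝ, J K L T b α ψ} := by
  refine le_csSup ((bddAbove_range_iInf_J K L T b).mono ?_)
    ⟨equispacedFreq K T L, equispacedFreq_zero K T _, ?_⟩
  · rintro _ ⟨α, -, rfl⟩
    exact ⟨α, rfl⟩
  · simp only [J_equispacedFreq hLK hT.ne', ciInf_const]
end

section
/- Let K and L be integers with 2 ≤ L ≤ K, let T > 0, and let b_0, …, b_{L−1} be nonnegative reals. If the rates of phase shift are chosen as α_l = 2πl/(KT) for l = 0, 1, …, L−1, then for every ψ ∈ ℝ^L the objective satisfies J(α, ψ) = K·∑_{l=0}^{L−1} b_l²; in particular the value of the objective is independent of ψ. -/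
open Real Finset

open Complex in
theorem sum_range_exp_two_pi_mul_I_eq_zero {K d : ℕ} (hd : ¬ K ∣ d) :
    ∑ k ∈ range K, cexp (2 * π * I * d * k / K) = 0 := by
  rcases eq_or_ne K 0 with rfl | hK
  · rfl
  have hζ := isPrimitiveRoot_exp K hK
  have hpow (k : ℕ) : cexp (2 * π * I * d * k / K) = (cexp (2 * π * I / K) ^ d) ^ k := by
    rw [← pow_mul, ← Complex.exp_nat_mul]
    push_cast
    ring_nf
  have hne : cexp (2 * π * I / K) ^ d ≠ 1 := mt (hζ.pow_eq_one_iff_dvd d).mp hd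
  simp_rw [hpow, geom_sum_eq hne, ← pow_mul, mul_comm d, pow_mul, hζ.pow_eq_one, one_pow,
    sub_self, zero_div]

open scoped Complex in
theorem sum_range_cos_sub_two_pi_mul_eq_zero {K d : ℕ} (hd : ¬ K ∣ d) (c : ℝ) :
    ∑ k ∈ range K, cos (c - 2 * π * d * k / K) = 0 := by
  have hcos (k : ℕ) : cos (c - 2 * π * d * k / K) =
      (cexp (2 * π * Complex.I * d * k / K) * cexp (-c * Complex.I)).re := by
    rw [← Complex.exp_add, ← cos_neg, neg_sub, ← Complex.exp_ofReal_mul_I_re]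
    push_cast
    ring_nf
  simp_rw [hcos, ← Complex.re_sum, ← sum_mul, sum_range_exp_two_pi_mul_I_eq_zero hd, zero_mul,
    Complex.zero_re]

theorem sum_range_cos_phase_diff_eq_zero {K l m : ℕ} (hlm : l < m) (hmK : m < K) {T : ℝ}
    (hT : T ≠ 0) (c : ℝ) :
    ∑ k ∈ range K, cos (c - (2 * π * m / (K * T) - 2 * π * l / (K * T)) * k * T) = 0 := by
  have hphase (k : ℕ) : (2 * π * m / (K * T) - 2 * π * l / (K * T)) * k * T =
      2 * π * (m - l : ℕ) * k / K := by
    rw [Nat.cast_sub hlm.le]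
    field_simp
  simp_rw [hphase]
  exact sum_range_cos_sub_two_pi_mul_eq_zero (Nat.not_dvd_of_pos_of_lt (by omega) (by omega)) c

theorem stmt_1_general (K L : ℕ) (hLK : L ≤ K) (T : ℝ) (hT : 0 < T)
    (b : Fin L → ℝ) :
    ∀ ψ : Fin L → ℝ,
      J K L T b (fun l => 2 * Real.pi * (l : ℝ) / (K * T)) ψ =
        (K : ℝ) * ∑ l, (b l) ^ 2 := by
  intro ψ
  have hcross : ∀ l, ∀ m ∈ Ioi l, b l * b m * ∑ k ∈ range K,
      cos ((ψ m - ψ l) - (2 * π * m / (K * T) - 2 * π * l / (K * T)) * k * T) = 0 :=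
    fun l m hm => by
      rw [sum_range_cos_phase_diff_eq_zero (Fin.lt_def.mp (mem_Ioi.mp hm)) (by omega) hT.ne',
        mul_zero]
  rw [J, sum_eq_zero fun l _ => sum_eq_zero (hcross l), mul_zero, add_zero]

/-- with the rates of phase shift `α_l = 2πl/(KT)`, the objective equals
`K·∑ b_l²` for every `ψ`, i.e., it is independent of `ψ`. -/
theorem stmt_1 (K L : ℕ) (hL : 2 ≤ L) (hLK : L ≤ K) (T : ℝ) (hT : 0 < T)
    (b : Fin L → ℝ) (hb : ∀ l, 0 ≤ b l) :
    ∀ ψ : Fin L → ℝ,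
      J K L T b (fun l => 2 * Real.pi * (l : ℝ) / (K * T)) ψ =
        (K : ℝ) * ∑ l, (b l) ^ 2 :=
  stmt_1_general K L hLK T hT b
end

section
/- Let K ≥ 2 be an integer, T > 0, and let b_0, b_1 be nonnegative reals. Then sup over α_1 ∈ ℝ of (inf over ψ_0, ψ_1 ∈ ℝ of K·(b_0² + b_1²) + 2·b_0·b_1·∑_{k=0}^{K−1} cos((ψ_1 − ψ_0) − α_1·k·T)) equals K·(b_0² + b_1²). That is, for L = 2 antennas the lower bound K·∑_l b_l² on the optimal worst-case objective is tight. -/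
/-!
For every phase rate `α₁` the objective takes the values `K(b₀² + b₁²) ± 2 b₀ b₁ s` at the
phases `(0, 0)` and `(0, π)`, so its infimum is at most `K(b₀² + b₁²)`. The rate
`α₁ = 2π / (K T)` attains this bound: the phases `α₁ k T = 2π k / K` run over the `K`-th roots
of unity, whose sum vanishes, so the objective is constant.
-/

open Real Finset

theorem Real.sum_range_cos_sub_two_pi_mul_div_eq_zero {K : ℕ} (hK : 1 < K) (δ : ℝ) :
    ∑ k ∈ range K, cos (δ - 2 * π * k / K) = 0 := by
  have hroots : ∑ k ∈ range K, Complex.exp (2 * π * Complex.I / K) ^ k = 0 :=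
    (Complex.isPrimitiveRoot_exp K (by omega)).geom_sum_eq_zero hK
  have hpow : ∀ k : ℕ, Complex.exp (2 * π * Complex.I / K) ^ k
      = Complex.exp ((2 * π * k / K : ℝ) * Complex.I) := fun k => by
    rw [← Complex.exp_nat_mul]; push_cast; ring_nf
  simp only [hpow] at hroots
  have hcos : ∑ k ∈ range K, cos (2 * π * k / K) = 0 := by
    simpa only [Complex.re_sum, Complex.exp_ofReal_mul_I_re, Complex.zero_re] using congrArg Complex.re hroots
  have hsin : ∑ k ∈ range K, sin (2 * π * k / K) = 0 := by
    simpa only [Complex.im_sum, Complex.exp_ofReal_mul_I_im, Complex.zero_im] using congrArg Complex.im hroots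
  simp only [cos_sub, sum_add_distrib, ← mul_sum, hcos, hsin, mul_zero, add_zero]

theorem Real.abs_sum_cos_le_card {ι : Type*} (s : Finset ι) (θ : ι → ℝ) :
    |∑ i ∈ s, cos (θ i)| ≤ s.card :=
  (abs_sum_le_sum_abs _ _).trans <| by
    simpa using sum_le_sum fun i (_ : i ∈ s) => abs_cos_le_one (θ i)

theorem ciInf_le_of_add_eq_two_mul {ι : Type*} {f : ι → ℝ} (hf : BddBelow (Set.range f))
    (i j : ι) {c : ℝ} (h : f i + f j = 2 * c) : ⨅ x, f x ≤ c := by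
  have := ciInf_le hf i
  have := ciInf_le hf j
  linarith

theorem stmt_2_general (K : ℕ) (hK : 2 ≤ K) (T : ℝ) (hT : 0 < T)
    (b₀ b₁ : ℝ) :
    sSup {v : ℝ | ∃ α₁ : ℝ,
        v = ⨅ ψ : ℝ × ℝ,
          ((K : ℝ) * (b₀ ^ 2 + b₁ ^ 2) +
            2 * b₀ * b₁ * ∑ k ∈ Finset.range K,
              Real.cos ((ψ.2 - ψ.1) - α₁ * (k : ℝ) * T))} =
      (K : ℝ) * (b₀ ^ 2 + b₁ ^ 2) := by
  set C : ℝ := K * (b₀ ^ 2 + b₁ ^ 2)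
  set c : ℝ := 2 * b₀ * b₁
  have hbdd (α : ℝ) : BddBelow (Set.range fun ψ : ℝ × ℝ =>
      C + c * ∑ k ∈ range K, cos ((ψ.2 - ψ.1) - α * k * T)) := by
    refine ⟨C - |c| * K, Set.forall_mem_range.2 fun ψ => ?_⟩
    have := abs_sum_cos_le_card (range K) fun k : ℕ => (ψ.2 - ψ.1) - α * k * T
    rw [card_range] at this
    have habs := neg_abs_le (c * ∑ k ∈ range K, cos ((ψ.2 - ψ.1) - α * k * T))
    rw [abs_mul] at habs
    linarith [mul_le_mul_of_nonneg_left this (abs_nonneg c)]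
  have hle (α : ℝ) : ⨅ ψ : ℝ × ℝ, C + c * ∑ k ∈ range K, cos ((ψ.2 - ψ.1) - α * k * T) ≤ C :=
    ciInf_le_of_add_eq_two_mul (hbdd α) (0, 0) (0, π) <| by
      simp only [sub_zero, zero_sub, cos_neg, cos_pi_sub, sum_neg_distrib]; ring
  have hattain : ⨅ ψ : ℝ × ℝ,
      C + c * ∑ k ∈ range K, cos ((ψ.2 - ψ.1) - 2 * π / (K * T) * k * T) = C := by
    have harg (δ : ℝ) (k : ℕ) : δ - 2 * π / (K * T) * k * T = δ - 2 * π * k / K := by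
      field_simp
    simp only [harg, sum_range_cos_sub_two_pi_mul_div_eq_zero (by omega : 1 < K), mul_zero,
      add_zero, ciInf_const]
  exact IsGreatest.csSup_eq ⟨⟨_, hattain.symm⟩, by rintro _ ⟨α, rfl⟩; exact hle α⟩

/-- for `L = 2` antennas, the optimal worst-case objective
`sup_{α₁} inf_{ψ₀,ψ₁} [K·(b₀² + b₁²) + 2·b₀·b₁·∑_{k<K} cos((ψ₁−ψ₀) − α₁·k·T)]`
equals `K·(b₀² + b₁²)`, i.e., the lower bound is tight. -/
theorem stmt_2 (K : ℕ) (hK : 2 ≤ K) (T : ℝ) (hT : 0 < T)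
    (b₀ b₁ : ℝ) (hb₀ : 0 ≤ b₀) (hb₁ : 0 ≤ b₁) :
    sSup {v : ℝ | ∃ α₁ : ℝ,
        v = ⨅ ψ : ℝ × ℝ,
          ((K : ℝ) * (b₀ ^ 2 + b₁ ^ 2) +
            2 * b₀ * b₁ * ∑ k ∈ Finset.range K,
              Real.cos ((ψ.2 - ψ.1) - α₁ * (k : ℝ) * T))} =
      (K : ℝ) * (b₀ ^ 2 + b₁ ^ 2) :=
  stmt_2_general K hK T hT b₀ b₁
end

section
/- Let K ≥ 3 be an integer, T > 0, and let b_0, b_1, b_2 be nonnegative reals. Then sup over (α_1, α_2) ∈ ℝ² of (inf over (ψ_0, ψ_1, ψ_2) ∈ ℝ³ of K·(b_0² + b_1² + b_2²) + 2·∑_{0 ≤ l < m ≤ 2} b_l b_m · ∑_{k=0}^{K−1} cos((ψ_m − ψ_l) − (α_m − α_l)·k·T), with α_0 = 0) equals K·(b_0² + b_1² + b_2²). That is, for L = 3 antennas the lower bound K·∑_l b_l² on the optimal worst-case objective is tight. -/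
/-!
Averaging over the phases `ψ = (0, ε₁π, ε₂π)`, `εᵢ ∈ {0, 1}`, cancels every cross term, since shifting
a phase difference by `π` negates its cosine sum; hence for every `α` the infimum over `ψ` is at most
`K ∑ b_l²`. Conversely, for `α = (2π/(KT), 4π/(KT))` every cross sum is the real part of a rotated sum
of all powers of a `K`-th root of unity different from `1` (here `K ≥ 3` is used), so it vanishes for
all `ψ` and the objective is constant `K ∑ b_l²`.
-/

open Real Finset

theorem sum_range_cos_sub_two_pi_mul_div_mul_eq_zero {K : ℕ} {m : ℤ} (hm : ¬ (K : ℤ) ∣ m)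
    (x : ℝ) : ∑ k ∈ range K, cos (x - 2 * π * m / K * k) = 0 := by
  rcases Nat.eq_zero_or_pos K with rfl | hK
  · simp
  set z : ℂ := Complex.exp (↑(2 * π * m / K) * Complex.I)
  have hz : z ≠ 1 := by
    intro h
    obtain ⟨n, hn⟩ := Complex.exp_eq_one_iff.1 h
    have hn' : (2 * π * m / K : ℝ) = n * (2 * π) := by
      simpa using congrArg Complex.im hn
    refine hm ⟨n, ?_⟩
    have : (m : ℝ) = K * n := by
      field_simp at hn'
      nlinarith [pi_pos]
    exact_mod_cast this
  have hzK : z ^ K = 1 := by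
    rw [← Complex.exp_nat_mul, ← Complex.exp_int_mul_two_pi_mul_I m]
    congr 1
    have hK0 : (K : ℂ) ≠ 0 := by exact_mod_cast hK.ne'
    push_cast
    field_simp
  have hgeom : ∑ k ∈ range K, z ^ k = 0 := by
    rw [geom_sum_eq hz, hzK, sub_self, zero_div]
  calc ∑ k ∈ range K, cos (x - 2 * π * m / K * k)
      = (Complex.exp (↑(-x) * Complex.I) * ∑ k ∈ range K, z ^ k).re := by
        rw [mul_sum, Complex.re_sum]
        refine sum_congr rfl fun k _ => ?_
        rw [← Complex.exp_nat_mul, ← Complex.exp_add, ← cos_neg, neg_sub]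
        convert (Complex.exp_ofReal_mul_I_re (2 * π * m / K * k - x)).symm using 3
        push_cast
        ring
    _ = 0 := by rw [hgeom, mul_zero, Complex.zero_re]

noncomputable def crossSum (K : ℕ) (T θ x : ℝ) : ℝ :=
  ∑ k ∈ range K, cos (x - θ * k * T)

-- `J` for `L = 3` and `α₀ = 0`; the `- 0` keeps it definitionally equal to the integrand of `stmt_3`.
noncomputable def objective (K : ℕ) (T b₀ b₁ b₂ : ℝ) (α : ℝ × ℝ) (ψ : ℝ × ℝ × ℝ) : ℝ :=
  K * (b₀ ^ 2 + b₁ ^ 2 + b₂ ^ 2) +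
    2 * (b₀ * b₁ * crossSum K T (α.1 - 0) (ψ.2.1 - ψ.1) +
      b₀ * b₂ * crossSum K T (α.2 - 0) (ψ.2.2 - ψ.1) +
      b₁ * b₂ * crossSum K T (α.2 - α.1) (ψ.2.2 - ψ.2.1))

section crossSum

variable {K : ℕ} {T : ℝ}

theorem crossSum_add_pi (θ x : ℝ) : crossSum K T θ (x + π) = -crossSum K T θ x := by
  simp only [crossSum, ← sum_neg_distrib, ← cos_add_pi, add_sub_right_comm]

theorem crossSum_sub_pi (θ x : ℝ) : crossSum K T θ (x - π) = -crossSum K T θ x := by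
  simp only [crossSum, ← sum_neg_distrib, ← cos_sub_pi, sub_right_comm]

theorem abs_crossSum_le (θ x : ℝ) : |crossSum K T θ x| ≤ K :=
  (abs_sum_le_sum_abs _ _).trans <| by
    simpa using sum_le_sum fun k (_ : k ∈ range K) => abs_cos_le_one (x - θ * k * T)

theorem crossSum_two_pi_mul_div_eq_zero (hT : T ≠ 0) {m : ℤ} (hm : ¬ (K : ℤ) ∣ m) (x : ℝ) :
    crossSum K T (2 * π * m / (K * T)) x = 0 := by
  rw [← sum_range_cos_sub_two_pi_mul_div_mul_eq_zero hm x]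
  refine sum_congr rfl fun k _ => ?_
  rw [mul_right_comm, div_mul_eq_mul_div, mul_div_mul_right _ _ hT]

end crossSum

section objective

variable {K : ℕ} {T b₀ b₁ b₂ : ℝ}

theorem objective_two_pi_div_eq (hK : 3 ≤ K) (hT : T ≠ 0) (ψ : ℝ × ℝ × ℝ) :
    objective K T b₀ b₁ b₂ (2 * π * (1 : ℤ) / (K * T), 2 * π * (2 : ℤ) / (K * T)) ψ =
      K * (b₀ ^ 2 + b₁ ^ 2 + b₂ ^ 2) := by
  have hdiff : 2 * π * (2 : ℤ) / (K * T) - 2 * π * (1 : ℤ) / (K * T) =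
      2 * π * (1 : ℤ) / (K * T) := by push_cast; ring
  have hK1 : ¬ (K : ℤ) ∣ 1 := fun h => by have := Int.le_of_dvd one_pos h; omega
  have hK2 : ¬ (K : ℤ) ∣ 2 := fun h => by have := Int.le_of_dvd two_pos h; omega
  simp only [objective, sub_zero, hdiff, crossSum_two_pi_mul_div_eq_zero hT hK1,
    crossSum_two_pi_mul_div_eq_zero hT hK2, mul_zero, add_zero]

theorem bddBelow_range_objective (α : ℝ × ℝ) :
    BddBelow (Set.range (objective K T b₀ b₁ b₂ α)) := by
  refine ⟨K * (b₀ ^ 2 + b₁ ^ 2 + b₂ ^ 2) - 2 * (|b₀ * b₁| + |b₀ * b₂| + |b₁ * b₂|) * K, ?_⟩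
  rintro _ ⟨ψ, rfl⟩
  have bound (c θ x : ℝ) : -(|c| * K) ≤ c * crossSum K T θ x := by
    refine neg_le_of_abs_le ?_
    rw [abs_mul]
    exact mul_le_mul_of_nonneg_left (abs_crossSum_le θ x) (abs_nonneg c)
  simp only [objective]
  linarith [bound (b₀ * b₁) (α.1 - 0) (ψ.2.1 - ψ.1), bound (b₀ * b₂) (α.2 - 0) (ψ.2.2 - ψ.1),
    bound (b₁ * b₂) (α.2 - α.1) (ψ.2.2 - ψ.2.1)]

theorem sum_objective_phase_flips (α : ℝ × ℝ) :
    objective K T b₀ b₁ b₂ α (0, 0, 0) + objective K T b₀ b₁ b₂ α (0, π, 0) +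
      objective K T b₀ b₁ b₂ α (0, 0, π) + objective K T b₀ b₁ b₂ α (0, π, π) =
      4 * (K * (b₀ ^ 2 + b₁ ^ 2 + b₂ ^ 2)) := by
  have hpi (θ : ℝ) : crossSum K T θ π = -crossSum K T θ 0 := by
    simpa using crossSum_add_pi (K := K) (T := T) θ 0
  have hnegpi (θ : ℝ) : crossSum K T θ (-π) = -crossSum K T θ 0 := by
    simpa using crossSum_sub_pi (K := K) (T := T) θ 0
  simp only [objective, sub_self, sub_zero, zero_sub, hpi, hnegpi]
  ring

theorem iInf_objective_le (α : ℝ × ℝ) :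
    ⨅ ψ, objective K T b₀ b₁ b₂ α ψ ≤ K * (b₀ ^ 2 + b₁ ^ 2 + b₂ ^ 2) := by
  have hbdd : BddBelow (Set.range (objective K T b₀ b₁ b₂ α)) := bddBelow_range_objective α
  linarith [ciInf_le hbdd (0, 0, 0), ciInf_le hbdd (0, π, 0), ciInf_le hbdd (0, 0, π),
    ciInf_le hbdd (0, π, π), sum_objective_phase_flips (K := K) (T := T) (b₀ := b₀) (b₁ := b₁)
    (b₂ := b₂) α]

end objective

theorem stmt_3_general (K : ℕ) (hK : 3 ≤ K) (T : ℝ) (hT : 0 < T)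
    (b₀ b₁ b₂ : ℝ) :
    sSup {v : ℝ | ∃ α : ℝ × ℝ,
        v = ⨅ ψ : ℝ × ℝ × ℝ,
          ((K : ℝ) * (b₀ ^ 2 + b₁ ^ 2 + b₂ ^ 2) +
            2 * (b₀ * b₁ * ∑ k ∈ Finset.range K,
                    Real.cos ((ψ.2.1 - ψ.1) - (α.1 - 0) * (k : ℝ) * T) +
                 b₀ * b₂ * ∑ k ∈ Finset.range K,
                    Real.cos ((ψ.2.2 - ψ.1) - (α.2 - 0) * (k : ℝ) * T) +
                 b₁ * b₂ * ∑ k ∈ Finset.range K,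
                    Real.cos ((ψ.2.2 - ψ.2.1) - (α.2 - α.1) * (k : ℝ) * T)))} =
      (K : ℝ) * (b₀ ^ 2 + b₁ ^ 2 + b₂ ^ 2) := by
  change sSup {v | ∃ α, v = ⨅ ψ, objective K T b₀ b₁ b₂ α ψ} = _
  refine IsGreatest.csSup_eq ⟨⟨(2 * π * (1 : ℤ) / (K * T), 2 * π * (2 : ℤ) / (K * T)), ?_⟩, ?_⟩
  · simp only [objective_two_pi_div_eq hK hT.ne', ciInf_const]
  · rintro _ ⟨α, rfl⟩
    exact iInf_objective_le α

/-- for `L = 3` antennas (with `α₀ = 0`), the optimal worst-case objective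
`sup_{(α₁,α₂)} inf_{(ψ₀,ψ₁,ψ₂)} [K·(b₀²+b₁²+b₂²) + 2·∑_{l<m} b_l b_m ∑_{k<K}
cos((ψ_m−ψ_l) − (α_m−α_l)·k·T)]` equals `K·(b₀²+b₁²+b₂²)`, i.e., the lower bound is tight. -/
theorem stmt_3 (K : ℕ) (hK : 3 ≤ K) (T : ℝ) (hT : 0 < T)
    (b₀ b₁ b₂ : ℝ) (hb₀ : 0 ≤ b₀) (hb₁ : 0 ≤ b₁) (hb₂ : 0 ≤ b₂) :
    sSup {v : ℝ | ∃ α : ℝ × ℝ,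
        v = ⨅ ψ : ℝ × ℝ × ℝ,
          ((K : ℝ) * (b₀ ^ 2 + b₁ ^ 2 + b₂ ^ 2) +
            2 * (b₀ * b₁ * ∑ k ∈ Finset.range K,
                    Real.cos ((ψ.2.1 - ψ.1) - (α.1 - 0) * (k : ℝ) * T) +
                 b₀ * b₂ * ∑ k ∈ Finset.range K,
                    Real.cos ((ψ.2.2 - ψ.1) - (α.2 - 0) * (k : ℝ) * T) +
                 b₁ * b₂ * ∑ k ∈ Finset.range K,
                    Real.cos ((ψ.2.2 - ψ.2.1) - (α.2 - α.1) * (k : ℝ) * T)))} =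
      (K : ℝ) * (b₀ ^ 2 + b₁ ^ 2 + b₂ ^ 2) :=
  stmt_3_general K hK T hT b₀ b₁ b₂
end

section
/- Let K > 1 and L ≥ 2 be integers, T > 0 a real, and let b_0, …, b_{L−1} be reals. Suppose α_0, …, α_{L−1} are reals such that (α_m − α_l)·T/2 ∈ X* for all 0 ≤ l < m ≤ L−1. Then for every ψ_0, …, ψ_{L−1} ∈ ℝ, ∑_{k=0}^{K−1} |∑_{l=0}^{L−1} b_l·exp(−i·(ψ_l − α_l·k·T))|² = K·∑_{l=0}^{L−1} b_l². In particular, the sum of the K squared effective channel gains is independent of the phase offsets ψ_l. -/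
open Real Finset Complex

/-- `X = {qπ : q ∈ ℤ}`. -/
def Xset : Set ℝ := {x | ∃ q : ℤ, x = (q : ℝ) * Real.pi}

/-- `X* = {qπ/K : q ∈ ℤ} \ X`. -/
def Xstar (K : ℕ) : Set ℝ :=
  {x | ∃ q : ℤ, x = (q : ℝ) * Real.pi / (K : ℝ)} \ Xset


/-!
Write the `k`-th inner sum as `∑_l c_l w_l^k` with `c_l = b_l e^{-iψ_l}` and `w_l = e^{iα_l T}`.
Expanding the squared norms, the sum over `k` becomes `∑_{l,m} c_l c̄_m ∑_k (w_l w̄_m)^k`.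
For `l ≠ m` the ratio `w_l w̄_m = e^{i(α_l − α_m)T}` is a `K`-th root of unity different from `1`
(this is exactly the condition `(α_l − α_m)T/2 ∈ X*`), so its geometric sum vanishes; the diagonal
terms contribute `K |c_l|² = K b_l²`, independently of `ψ`.
-/

open ComplexConjugate

theorem geom_sum_eq_zero_of_pow_eq_one {R : Type*} [DivisionRing R] {z : R} {K : ℕ}
    (hK : z ^ K = 1) (hz : z ≠ 1) : ∑ k ∈ range K, z ^ k = 0 := by
  rw [geom_sum_eq hz, hK, sub_self, zero_div]

theorem sum_sq_norm_sum_mul_pow {ι : Type*} [Fintype ι] [DecidableEq ι] (K : ℕ) (c w : ι → ℂ)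
    (hw : ∀ l, ‖w l‖ = 1)
    (horth : ∀ l m, l ≠ m → ∑ k ∈ range K, (w l * conj (w m)) ^ k = 0) :
    ∑ k ∈ range K, ‖∑ l, c l * w l ^ k‖ ^ 2 = K * ∑ l, ‖c l‖ ^ 2 := by
  have hdiag : ∀ l, ∑ k ∈ range K, (w l * conj (w l)) ^ k = K := by
    simp [mul_conj', hw]
  apply Complex.ofReal_injective
  push_cast
  calc ∑ k ∈ range K, (‖∑ l, c l * w l ^ k‖ : ℂ) ^ 2
      = ∑ k ∈ range K, ∑ l, ∑ m, c l * conj (c m) * (w l * conj (w m)) ^ k := by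
        refine sum_congr rfl fun k _ => ?_
        rw [← mul_conj', map_sum, sum_mul_sum]
        simp only [map_mul, map_pow, mul_pow]
        exact sum_congr rfl fun l _ => sum_congr rfl fun m _ => by ring
    _ = ∑ l, ∑ m, c l * conj (c m) * ∑ k ∈ range K, (w l * conj (w m)) ^ k := by
        rw [sum_comm]
        simp_rw [mul_sum]
        exact sum_congr rfl fun l _ => sum_comm
    _ = ∑ l, c l * conj (c l) * K := by
        refine sum_congr rfl fun l _ => ?_
        rw [sum_eq_single l (fun m _ hml => by rw [horth l m (Ne.symm hml), mul_zero])
          (by simp), hdiag]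
    _ = K * ∑ l, (‖c l‖ : ℂ) ^ 2 := by
        simp_rw [mul_conj', mul_sum]
        exact sum_congr rfl fun l _ => mul_comm _ _

theorem exp_ofReal_mul_I_mul_conj (s t : ℝ) :
    exp (s * I) * conj (exp (t * I)) = exp ((s - t : ℝ) * I) := by
  rw [← exp_conj, ← Complex.exp_add, map_mul, conj_ofReal, conj_I]
  push_cast
  ring_nf

theorem neg_mem_Xstar {K : ℕ} {x : ℝ} (hx : x ∈ Xstar K) : -x ∈ Xstar K := by
  obtain ⟨⟨q, hq⟩, hX⟩ := hx
  refine ⟨⟨-q, by rw [hq]; push_cast; ring⟩, fun ⟨n, hn⟩ => hX ⟨-n, ?_⟩⟩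
  push_cast
  linarith

theorem exp_mul_I_pow_eq_one_of_half_mem_Xstar {K : ℕ} {θ : ℝ} (hθ : θ / 2 ∈ Xstar K) :
    exp (θ * I) ^ K = 1 := by
  obtain ⟨⟨q, hq⟩, -⟩ := hθ
  rcases eq_or_ne K 0 with rfl | hK
  · exact pow_zero _
  have hθq : θ = 2 * (q * π / K) := by rw [← hq]; ring
  rw [← Complex.exp_nat_mul, ← exp_int_mul_two_pi_mul_I q, hθq]
  push_cast
  field_simp

theorem exp_mul_I_ne_one_of_half_mem_Xstar {K : ℕ} {θ : ℝ} (hθ : θ / 2 ∈ Xstar K) :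
    exp (θ * I) ≠ 1 := by
  rw [Ne, Complex.exp_eq_one_iff]
  rintro ⟨n, hn⟩
  refine hθ.2 ⟨n, ?_⟩
  have h : (θ : ℂ) = (n * (2 * π) : ℝ) := by
    push_cast
    exact mul_right_cancel₀ I_ne_zero (by rw [hn]; ring)
  linarith [ofReal_injective h]

theorem geom_sum_exp_mul_I_eq_zero_of_half_mem_Xstar {K : ℕ} {θ : ℝ} (hθ : θ / 2 ∈ Xstar K) :
    ∑ k ∈ range K, exp (θ * I) ^ k = 0 :=
  geom_sum_eq_zero_of_pow_eq_one (exp_mul_I_pow_eq_one_of_half_mem_Xstar hθ)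
    (exp_mul_I_ne_one_of_half_mem_Xstar hθ)

theorem stmt_12_general (K L : ℕ) (T : ℝ)
    (b α : Fin L → ℝ)
    (hα : ∀ l m : Fin L, l < m → ((α m - α l) * T / 2) ∈ Xstar K) :
    ∀ ψ : Fin L → ℝ,
      ∑ k ∈ Finset.range K,
          (‖(∑ l, (b l : ℂ) *
            Complex.exp (-Complex.I * ((ψ l : ℂ) - (α l : ℂ) * (k : ℂ) * (T : ℂ))))‖) ^ 2 =
        (K : ℝ) * ∑ l, (b l) ^ 2 := by
  intro ψ
  have hterm : ∀ l (k : ℕ), (b l : ℂ) * exp (-I * (ψ l - α l * k * T)) =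
      (b l * exp ((-ψ l : ℝ) * I)) * exp ((α l * T : ℝ) * I) ^ k := by
    intro l k
    rw [← Complex.exp_nat_mul, mul_assoc (b l : ℂ), ← Complex.exp_add]
    push_cast
    ring_nf
  have hmem : ∀ l m, l ≠ m → (α l * T - α m * T) / 2 ∈ Xstar K := by
    intro l m hlm
    rcases hlm.lt_or_gt with hlt | hgt
    · convert neg_mem_Xstar (hα l m hlt) using 1
      ring
    · convert hα m l hgt using 1
      ring
  simp_rw [hterm]
  rw [sum_sq_norm_sum_mul_pow K _ _ (fun l => norm_exp_ofReal_mul_I _) fun l m hlm => by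
    rw [exp_ofReal_mul_I_mul_conj]
    exact geom_sum_exp_mul_I_eq_zero_of_half_mem_Xstar (hmem l m hlm)]
  congr 1
  refine sum_congr rfl fun l _ => ?_
  rw [norm_mul, norm_exp_ofReal_mul_I, mul_one, norm_real, Real.norm_eq_abs, sq_abs]

/-- if the rates of phase shift satisfy `(α_m − α_l)·T/2 ∈ X*` for all
`l < m`, then `∑_{k=0}^{K−1} |∑_l b_l·exp(−i(ψ_l − α_l·k·T))|² = K·∑_l b_l²` for every
choice of phase offsets `ψ`, i.e., the sum of the `K` squared effective channel gains
is independent of `ψ`. -/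
theorem stmt_12 (K L : ℕ) (hK : 1 < K) (hL : 2 ≤ L) (T : ℝ) (hT : 0 < T)
    (b α : Fin L → ℝ)
    (hα : ∀ l m : Fin L, l < m → ((α m - α l) * T / 2) ∈ Xstar K) :
    ∀ ψ : Fin L → ℝ,
      ∑ k ∈ Finset.range K,
          (‖(∑ l, (b l : ℂ) *
            Complex.exp (-Complex.I * ((ψ l : ℂ) - (α l : ℂ) * (k : ℂ) * (T : ℂ))))‖) ^ 2 =
        (K : ℝ) * ∑ l, (b l) ^ 2 :=
  stmt_12_general K L T b α hα
end
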